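/- For r ≥ 2, max_j { q_j + (1/(r−1)) ∑ᵢ ‖(qᵢρᵢ − q_jρ_j)⁺‖₁ } ≥ (1/r)·(1 + (1/(r−1))·∑_{1≤i<j≤r} ‖qᵢρᵢ − q_jρ_j‖₁); i.e., the first new lower bound dominates the second. -/

import Mathlib

open scoped ComplexOrder

/-- The operator absolute value `√(AᴴA)` of a matrix. -/
noncomputable def matAbs {n : ℕ} (A : Matrix (Fin n) (Fin n) ℂ) : Matrix (Fin n) (Fin n) ℂ :=
  (Matrix.posSemidef_conjTranspose_mul_self A).1.eigenvectorUnitary.1 *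
    Matrix.diagonal ((↑) ∘ (√·) ∘ (Matrix.posSemidef_conjTranspose_mul_self A).1.eigenvalues) *
    (star (Matrix.posSemidef_conjTranspose_mul_self A).1.eigenvectorUnitary : Matrix (Fin n) (Fin n) ℂ)

/-- The trace norm `‖A‖₁ = tr √(AᴴA)`. -/
noncomputable def traceNorm {n : ℕ} (A : Matrix (Fin n) (Fin n) ℂ) : ℝ :=
  ((matAbs A).trace).re

/-- The positive part `A⁺ = (|A| + A)/2` of a self-adjoint matrix `A`, so that
`A = A⁺ - A⁻` with `A⁺, A⁻ ≥ 0`. -/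
noncomputable def matPosPart {n : ℕ} (A : Matrix (Fin n) (Fin n) ℂ) : Matrix (Fin n) (Fin n) ℂ :=
  (2 : ℂ)⁻¹ • (matAbs A + A)

/-- A density operator: positive semidefinite with unit trace. -/
def IsDensity {n : ℕ} (ρ : Matrix (Fin n) (Fin n) ℂ) : Prop :=
  ρ.PosSemidef ∧ ρ.trace = 1

/-- A POVM with `r` outcomes: positive semidefinite effects summing to the identity. -/
def IsPOVM {n r : ℕ} (M : Fin r → Matrix (Fin n) (Fin n) ℂ) : Prop :=
  (∀ i, (M i).PosSemidef) ∧ ∑ i, M i = 1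

/-- Success probability `∑ i, q i * tr (ρ i * M i)` of a measurement. -/
noncomputable def successProb {n r : ℕ} (q : Fin r → ℝ)
    (ρ M : Fin r → Matrix (Fin n) (Fin n) ℂ) : ℝ :=
  ∑ i, q i * ((ρ i * M i).trace).re

/-- Optimal success probability under minimum-error discrimination. -/
noncomputable def optSuccess {n r : ℕ} (q : Fin r → ℝ)
    (ρ : Fin r → Matrix (Fin n) (Fin n) ℂ) : ℝ :=
  sSup {p | ∃ M, IsPOVM M ∧ p = successProb q ρ M}

/-! The positive parts of `X` and `-X` are `X⁺` and `X⁻`, which are positive semidefinite and sum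
to `|X|`, so `‖X⁺‖₁ + ‖(-X)⁺‖₁ = ‖X‖₁` for self-adjoint `X`. Summing the `r` quantities maximised on
the left over `j` and pairing the terms `(i, j)` and `(j, i)` therefore gives exactly
`1 + (1/(r-1)) ∑_{i<j} ‖qᵢρᵢ - q_jρ_j‖₁`, and the maximum dominates the mean. -/

open scoped MatrixOrder
open Matrix

section TraceNorm

variable {n : ℕ}

lemma matAbs_eq_cfcAbs (A : Matrix (Fin n) (Fin n) ℂ) : matAbs A = CFC.abs A := by
  have hA := posSemidef_conjTranspose_mul_self A
  rw [CFC.abs, star_eq_conjTranspose, CFC.sqrt_eq_cfc, cfc_nnreal_eq_real _ _ hA.nonneg,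
    hA.1.cfc_eq, matAbs]
  simp only [IsHermitian.cfc, Unitary.conjStarAlgAut_apply]
  congr 3
  funext i
  simp [Real.coe_toNNReal', max_eq_left (hA.eigenvalues_nonneg i)]

lemma matPosPart_eq_posPart {X : Matrix (Fin n) (Fin n) ℂ} (hX : X.IsHermitian) :
    matPosPart X = X⁺ := by
  rw [matPosPart, matAbs_eq_cfcAbs, CFC.abs_add_self X hX.isSelfAdjoint]
  module

lemma traceNorm_of_nonneg {P : Matrix (Fin n) (Fin n) ℂ} (hP : 0 ≤ P) :
    traceNorm P = P.trace.re := by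
  rw [traceNorm, matAbs_eq_cfcAbs, CFC.abs_of_nonneg P hP]

lemma traceNorm_matPosPart_add_matPosPart_neg {X : Matrix (Fin n) (Fin n) ℂ}
    (hX : X.IsHermitian) :
    traceNorm (matPosPart X) + traceNorm (matPosPart (-X)) = traceNorm X := by
  rw [matPosPart_eq_posPart hX, matPosPart_eq_posPart hX.neg, CFC.posPart_neg,
    traceNorm_of_nonneg (CFC.posPart_nonneg X), traceNorm_of_nonneg (CFC.negPart_nonneg X),
    ← Complex.add_re, ← trace_add, CFC.posPart_add_negPart X hX.isSelfAdjoint, traceNorm,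
    matAbs_eq_cfcAbs]

lemma traceNorm_zero : traceNorm (0 : Matrix (Fin n) (Fin n) ℂ) = 0 := by
  simp [traceNorm_of_nonneg le_rfl]

lemma matPosPart_zero : matPosPart (0 : Matrix (Fin n) (Fin n) ℂ) = 0 := by
  simp [matPosPart, matAbs_eq_cfcAbs]

end TraceNorm

open Finset

lemma Fintype.sum_sum_eq_sum_lt_add_swap {ι M : Type*} [Fintype ι] [LinearOrder ι]
    [AddCommMonoid M] (t : ι → ι → M) (hdiag : ∀ i, t i i = 0) :
    ∑ i, ∑ j, t i j =
      ∑ p ∈ univ.filter (fun p : ι × ι => p.1 < p.2), (t p.1 p.2 + t p.2 p.1) := by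
  rw [← Fintype.sum_prod_type', ← sum_filter_add_sum_filter_not univ (fun p : ι × ι => p.1 < p.2),
    sum_add_distrib]
  congr 1
  have hswap : ∑ p ∈ univ.filter (fun p : ι × ι => p.1 < p.2), t p.2 p.1 =
      ∑ p ∈ univ.filter (fun p : ι × ι => p.2 < p.1), t p.1 p.2 :=
    Finset.sum_equiv (Equiv.prodComm ι ι) (by simp) (by simp)
  rw [hswap]
  refine (Finset.sum_subset (fun p => by simpa using le_of_lt) fun p hp hlt => ?_).symm
  simp only [mem_filter, mem_univ, true_and, not_lt] at hp hlt
  rw [le_antisymm hp hlt, hdiag]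

lemma Finset.sum_div_card_le_sup' {ι K : Type*} [Field K] [LinearOrder K] [IsStrictOrderedRing K]
    {s : Finset ι} (hs : s.Nonempty) (f : ι → K) :
    (∑ i ∈ s, f i) / #s ≤ s.sup' hs f := by
  rw [div_le_iff₀ (by simpa using hs.card_pos), mul_comm, ← nsmul_eq_mul]
  exact sum_le_card_nsmul s f _ fun i hi => le_sup' f hi

theorem stmt13 {n r : ℕ} (hr : 2 ≤ r) (ρ : Fin r → Matrix (Fin n) (Fin n) ℂ)
    (q : Fin r → ℝ) (hρ : ∀ i, IsDensity (ρ i))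
    (hq1 : ∑ i, q i = 1) :
    Finset.univ.sup' (Finset.univ_nonempty_iff.mpr ⟨⟨0, by omega⟩⟩)
        (fun j => q j + (1 / ((r : ℝ) - 1)) *
          ∑ i, traceNorm (matPosPart ((q i : ℂ) • ρ i - (q j : ℂ) • ρ j)))
      ≥ (1 / (r : ℝ)) * (1 + (1 / ((r : ℝ) - 1)) *
          ∑ p ∈ Finset.univ.filter (fun p : Fin r × Fin r => p.1 < p.2),
            traceNorm ((q p.1 : ℂ) • ρ p.1 - (q p.2 : ℂ) • ρ p.2)) := by
  set D : Fin r → Fin r → Matrix (Fin n) (Fin n) ℂ :=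
    fun i j => (q i : ℂ) • ρ i - (q j : ℂ) • ρ j
  set f : Fin r → ℝ := fun j => q j + (1 / ((r : ℝ) - 1)) * ∑ i, traceNorm (matPosPart (D i j))
  have hD : ∀ i j, (D i j).IsHermitian := fun i j =>
    ((hρ i).1.1.smul (Complex.conj_ofReal _)).sub ((hρ j).1.1.smul (Complex.conj_ofReal _))
  have hD_swap : ∀ i j, D j i = -D i j := fun i j => (neg_sub _ _).symm
  have hsum : ∑ j, f j = 1 + (1 / ((r : ℝ) - 1)) *
      ∑ p ∈ univ.filter (fun p : Fin r × Fin r => p.1 < p.2), traceNorm (D p.1 p.2) := by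
    rw [sum_add_distrib, hq1, ← mul_sum, sum_comm, Fintype.sum_sum_eq_sum_lt_add_swap _ fun i => by
      simp only [D, sub_self, matPosPart_zero, traceNorm_zero]]
    refine congrArg _ (congrArg _ (sum_congr rfl fun p _ => ?_))
    rw [hD_swap p.1 p.2]
    exact traceNorm_matPosPart_add_matPosPart_neg (hD p.1 p.2)
  have hmean := sum_div_card_le_sup' (univ_nonempty_iff.mpr ⟨⟨0, by omega⟩⟩) f
  rw [hsum, card_univ, Fintype.card_fin] at hmean
  rwa [ge_iff_le, one_div_mul_eq_div]
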